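/- The dichotomies ({0,1,2,3,6,7}/{4,5,8,9,10,11}) and ({0,1,2,4,5,8}/{3,6,7,9,10,11}) of Z_12 are both strong, each with autocomplementarity T^{11}.11, i.e. x ↦ 11 − x mod 12. -/

import Mathlib

def Dich71 : Set (ZMod 12) := {0,1,2,3,6,7}
def Dich75 : Set (ZMod 12) := {0,1,2,4,5,8}

/-! Everything is a finite computation in `ZMod 12`: written as coercions of finsets, the
hexachords have images under affine maps given by `Finset.image`, so rigidity (a check over
all 144 pairs `(u, t)`) and autocomplementarity become decidable statements about finsets. -/

def IsAffinelyRigid {n : ℕ} (X : Set (ZMod n)) : Prop :=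
  ∀ u t : ZMod n, IsUnit u → (fun x => u * x + t) '' X = X → u = 1 ∧ t = 0

lemma isAffinelyRigid_coe {n : ℕ} {s : Finset (ZMod n)}
    (h : ∀ u t : ZMod n, IsUnit u → s.image (fun x => u * x + t) = s → u = 1 ∧ t = 0) :
    IsAffinelyRigid (s : Set (ZMod n)) := fun u t hu hs =>
  h u t hu (by rwa [← Finset.coe_inj, Finset.coe_image])

lemma Finset.image_coe_eq_compl_coe {α β : Type*} [Fintype β] [DecidableEq β] {f : α → β}
    {s : Finset α} {t : Finset β} (h : s.image f = tᶜ) : f '' s = (t : Set β)ᶜ := by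
  rw [← Finset.coe_image, h, Finset.coe_compl]

lemma dich71_eq_coe : Dich71 = ↑({0,1,2,3,6,7} : Finset (ZMod 12)) := by
  simp [Dich71]

lemma dich75_eq_coe : Dich75 = ↑({0,1,2,4,5,8} : Finset (ZMod 12)) := by
  simp [Dich75]

lemma compl_dich71 : Dich71ᶜ = {4,5,8,9,10,11} := by
  rw [dich71_eq_coe, ← Finset.coe_compl,
    (by decide : ({0,1,2,3,6,7} : Finset (ZMod 12))ᶜ = {4,5,8,9,10,11})]
  simp

lemma compl_dich75 : Dich75ᶜ = {3,6,7,9,10,11} := by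
  rw [dich75_eq_coe, ← Finset.coe_compl,
    (by decide : ({0,1,2,4,5,8} : Finset (ZMod 12))ᶜ = {3,6,7,9,10,11})]
  simp

/-- The dichotomies ({0,1,2,3,6,7}/{4,5,8,9,10,11}) and
({0,1,2,4,5,8}/{3,6,7,9,10,11}) of ℤ₁₂ are both strong, each with
autocomplementarity T¹¹.11 : x ↦ 11 − x. -/
theorem dich71_dich75_strong :
    (({4,5,8,9,10,11} : Set (ZMod 12)) = Dich71ᶜ) ∧
    (({3,6,7,9,10,11} : Set (ZMod 12)) = Dich75ᶜ) ∧
    IsUnit (11 : ZMod 12) ∧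
    (∀ u t : ZMod 12, IsUnit u →
      (fun x => u * x + t) '' Dich71 = Dich71 → u = 1 ∧ t = 0) ∧
    (fun x : ZMod 12 => 11 * x + 11) '' Dich71 = Dich71ᶜ ∧
    (∀ u t : ZMod 12, IsUnit u →
      (fun x => u * x + t) '' Dich75 = Dich75 → u = 1 ∧ t = 0) ∧
    (fun x : ZMod 12 => 11 * x + 11) '' Dich75 = Dich75ᶜ := by
  refine ⟨compl_dich71.symm, compl_dich75.symm, by decide, ?_⟩
  rw [dich71_eq_coe, dich75_eq_coe]
  exact ⟨isAffinelyRigid_coe (by decide), Finset.image_coe_eq_compl_coe (by decide),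
    isAffinelyRigid_coe (by decide), Finset.image_coe_eq_compl_coe (by decide)⟩
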